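/- arXiv:0906.4292 — 5 statements merged into one kernel-verified Lean document; each statement's English description precedes it below -/
import Mathlib

section
/- There exist no integers $u_0^l, v_0^l, u_\infty^l, v_\infty^l, u_0^r, v_0^r, u_\infty^r, v_\infty^r, n$ with $n \geq 1$ and $v_0^l, v_\infty^l, v_0^r, v_\infty^r \geq 2$ satisfying simultaneously: (1) $-u_0^l v_\infty^l - u_\infty^l v_0^l = 1$, (2) $u_0^r v_\infty^r + u_\infty^r v_0^r + v_0^r v_\infty^r n = 1$, (3) $u_0^l v_0^r \leq u_0^r v_0^l$, and (4) $u_\infty^l v_\infty^r \leq u_\infty^r v_\infty^l$. -/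
/-- The Diophantine core of the proof that a smooth complete rational ℂ*-surface
whose multidivisor has three nontrivial slices with the described extremal vertex
data cannot exist. -/
theorem no_three_slice_configuration :
    ¬ ∃ u0l v0l uil vil u0r v0r uir vir n : ℤ,
      1 ≤ n ∧ 2 ≤ v0l ∧ 2 ≤ vil ∧ 2 ≤ v0r ∧ 2 ≤ vir ∧
      (-u0l * vil - uil * v0l = 1) ∧
      (u0r * vir + uir * v0r + v0r * vir * n = 1) ∧
      u0l * v0r ≤ u0r * v0l ∧
      uil * vir ≤ uir * vil := by
  rintro ⟨u0l, v0l, uil, vil, u0r, v0r, uir, vir, n, hn, h0l, hil, h0r, hir, e1, e2, i1, i2⟩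
  have h1 : u0l * v0r * (vil * vir) ≤ u0r * v0l * (vil * vir) := by
    apply mul_le_mul_of_nonneg_right i1; positivity
  have h2 : uil * vir * (v0l * v0r) ≤ uir * vil * (v0l * v0r) := by
    apply mul_le_mul_of_nonneg_right i2; positivity
  nlinarith [mul_pos (show (0:ℤ) < v0l by linarith) (show (0:ℤ) < vil by linarith),
    mul_le_mul (show (2:ℤ) ≤ v0r from h0r) (show (2:ℤ) ≤ vir from hir) (by norm_num) (by linarith),
    mul_le_mul (show (2:ℤ) ≤ v0l from h0l) (show (2:ℤ) ≤ vil from hil) (by norm_num) (by linarith),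
    mul_le_mul_of_nonneg_left hn (show (0:ℤ) ≤ v0l * vil * (v0r * vir) by positivity)]
end

section
/- Let $u_0^l, v_0^l, u_\infty^l, v_\infty^l, u_0^r, v_0^r, u_\infty^r, v_\infty^r, n$ be integers with $v_0^l, v_\infty^l, v_0^r, v_\infty^r > 0$ satisfying $-u_0^l v_\infty^l - u_\infty^l v_0^l = 1$, $u_0^r v_\infty^r + u_\infty^r v_0^r + v_0^r v_\infty^r n = 1$, $u_0^l v_0^r \leq u_0^r v_0^l$, and $u_\infty^l v_\infty^r \leq u_\infty^r v_\infty^l$. Then $v_0^r v_\infty^r + v_0^l v_\infty^l \geq v_0^l v_\infty^l v_0^r v_\infty^r \cdot n$. -/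
/-- Key intermediate inequality in showing that certain multidivisor configurations
for smooth complete rational ℂ*-surfaces are impossible. -/
theorem multidivisor_inequality
    (u0l v0l uil vil u0r v0r uir vir n : ℤ)
    (hv0l : 0 < v0l) (hvil : 0 < vil) (hv0r : 0 < v0r) (hvir : 0 < vir)
    (h1 : -u0l * vil - uil * v0l = 1)
    (h2 : u0r * vir + uir * v0r + v0r * vir * n = 1)
    (h3 : u0l * v0r ≤ u0r * v0l)
    (h4 : uil * vir ≤ uir * vil) :
    v0l * vil * v0r * vir * n ≤ v0r * vir + v0l * vil := by
  have key : v0r * vir + v0l * vil - v0l * vil * v0r * vir * n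
      = (u0r * v0l - u0l * v0r) * (vil * vir) + (uir * vil - uil * vir) * (v0l * v0r) := by
    linear_combination (-(v0r * vir)) * h1 - (v0l * vil) * h2
  nlinarith [mul_nonneg (mul_nonneg (sub_nonneg.2 h3) hvil.le) hvir.le,
    mul_nonneg (mul_nonneg (sub_nonneg.2 h4) hv0l.le) hv0r.le]
end

section
/- For $r$ even, define on $\operatorname{Pic}(\mathcal{F}_r) = \mathbb{Z} P \oplus \mathbb{Z} Q$ (with $P^2 = 0$, $P\cdot Q = 1$, $Q^2 = r$, $-K = 2Q+(2-r)P$) the tuple $\tilde{\mathcal{A}}_{r,i} = (-\frac{r}{2}P+Q,\ P+i(-\frac{r}{2}P+Q),\ -\frac{r}{2}P+Q,\ P-i(-\frac{r}{2}P+Q))$. Then $\tilde{\mathcal{A}}_{r,i}$ is a toric system, and the map $\bar\pi\colon P \mapsto P', Q \mapsto Q'-\alpha P'$ into $\operatorname{Pic}(\mathcal{F}_{r+2\alpha})$ sends $\tilde{\mathcal{A}}_{r,i}$ elementwise to $\tilde{\mathcal{A}}_{r+2\alpha,i}$. -/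
/-- The intersection form on `Pic (𝔽_s) = ℤP ⊕ ℤQ` with `P² = 0`, `P·Q = 1`, `Q² = s`. -/
def interFr (s : ℤ) (v w : ℤ × ℤ) : ℤ := v.1 * w.2 + v.2 * w.1 + s * v.2 * w.2

/-- For `r = 2m` even, the tuple
`𝒜̃_{r,i} = (-(r/2)P+Q, P+i(-(r/2)P+Q), -(r/2)P+Q, P-i(-(r/2)P+Q))` in coordinates. -/
def stdAt (m i : ℤ) : Fin 4 → ℤ × ℤ :=
  ![(-m, 1), (1 - i * m, i), (-m, 1), (1 + i * m, -i)]

/-- The map `Pic (𝔽_r) → Pic (𝔽_{r+2α})`, `P ↦ P'`, `Q ↦ Q' - αP'`, in coordinates. -/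
def piMap (α : ℤ) (v : ℤ × ℤ) : ℤ × ℤ := (v.1 - α * v.2, v.2)

/-- For `r = 2m` even, `𝒜̃_{r,i}` is a toric system on `𝔽_r` (cyclically adjacent
intersection numbers `1`, non-adjacent `0`, sum the anticanonical class
`2Q + (2-r)P`), and the degeneration map `P ↦ P'`, `Q ↦ Q' - αP'` sends it
elementwise to `𝒜̃_{r+2α,i}`. -/
theorem stdAt_toric_system_and_degeneration (m i α : ℤ) (hm : 0 ≤ m) (hα : 1 ≤ α) :
    (∀ j : Fin 4, interFr (2 * m) (stdAt m i j) (stdAt m i (j + 1)) = 1) ∧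
    (∀ j : Fin 4, interFr (2 * m) (stdAt m i j) (stdAt m i (j + 2)) = 0) ∧
    (∑ j : Fin 4, stdAt m i j = (2 - 2 * m, 2)) ∧
    (∀ j : Fin 4, piMap α (stdAt m i j) = stdAt (m + α) i j) := by
  refine ⟨?_, ?_, ?_, ?_⟩
  · intro j; fin_cases j <;> simp [interFr, stdAt] <;> ring
  · intro j; fin_cases j <;> simp [interFr, stdAt] <;> ring
  · simp [stdAt, Fin.sum_univ_four, Prod.ext_iff]; constructor <;> ring
  · intro j; fin_cases j <;> simp [piMap, stdAt, Prod.ext_iff] <;> ring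
end

section
/- Let $(N, \cdot)$ be a free abelian group with a symmetric bilinear form, $K \in N$, and let $\mathcal{A} = (A_1, \ldots, A_n)$ ($n \geq 3$) be a toric system with respect to $(N, \cdot, K)$, i.e., $A_j \cdot A_{j+1} = 1$ cyclically, $A_j \cdot A_k = 0$ for non-adjacent indices, and $\sum A_j = -K$. Form $\tilde{N} = N \oplus \mathbb{Z} R$ with the bilinear form extended by $R \cdot R = -1$ and $R \cdot v = 0$ for $v \in N$, and set $\tilde{K} = K + R$. Then for every $1 \leq i \leq n$, the augmentation $\operatorname{Aug}_i \mathcal{A} = (A_1, \ldots, A_{i-1}, A_i - R, R, A_{i+1} - R, A_{i+2}, \ldots, A_n)$ is a toric system with respect to $(\tilde{N}, \cdot, \tilde{K})$. -/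
lemma modfact (a m : ℕ) (h : a < 2*m) :
    (a % m = a ∧ a < m) ∨ (a % m + m = a ∧ a % m < m) := by
  rcases Nat.lt_or_ge a m with h'|h'
  · left; exact ⟨Nat.mod_eq_of_lt h', h'⟩
  · rcases Nat.eq_zero_or_pos m with rfl|h0
    · omega
    · right
      rw [Nat.mod_eq_sub_mod h', Nat.mod_eq_of_lt (by omega)]
      omega

/-- A toric system with respect to a pairing `B` and a canonical class `K`:
cyclically adjacent elements pair to `1`, non-adjacent elements pair to `0`,
and the sum of the elements is `-K`. -/
def IsToricSystem {N : Type*} [AddCommGroup N] (B : N → N → ℤ) (K : N)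
    {n : ℕ} [NeZero n] (A : Fin n → N) : Prop :=
  (∀ j : Fin n, B (A j) (A (j + 1)) = 1) ∧
  (∀ j k : Fin n, k ≠ j - 1 → k ≠ j → k ≠ j + 1 → B (A j) (A k) = 0) ∧
  (∑ j, A j) = -K

/-- The augmentation `Aug_i 𝒜 = (A_1, …, A_{i-1}, A_i - R, R, A_{i+1} - R,
A_{i+2}, …, A_n)` of a cyclic tuple `A` at position `i`, with exceptional class `R`
(indices cyclic; for the last position it modifies `A_n` and `A_1`). -/
def augment {N : Type*} [AddCommGroup N] {n : ℕ} [NeZero n]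
    (A : Fin n → N) (i : Fin n) (R : N) : Fin (n + 1) → N := fun j =>
  if j = Fin.castSucc i then A i - R
  else if j = Fin.castSucc i + 1 then R
  else if j = Fin.castSucc i + 2 then A (i + 1) - R
  else if h : (j : ℕ) < (i : ℕ) then A ⟨j, h.trans i.isLt⟩
  else A ⟨(j : ℕ) - 1, by have h1 := i.isLt; have h2 := j.isLt; omega⟩

set_option maxHeartbeats 1600000 in
/-- Augmentation of a toric system is a toric system: for `Ñ = N ⊕ ℤR` with the
bilinear form extended by `R·R = -1`, `R ⊥ N`, and `K̃ = K + R`, the augmentation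
`Aug_i 𝒜` of a toric system `𝒜` on `(N, B, K)` is a toric system on `(Ñ, B̃, K̃)`. -/
theorem augment_isToricSystem {N : Type*} [AddCommGroup N] (B : N → N → ℤ)
    (hsymm : ∀ x y, B x y = B y x)
    (hadd : ∀ x y z, B (x + y) z = B x z + B y z)
    (K : N) (n : ℕ) [NeZero n] (hn : 3 ≤ n) (A : Fin n → N)
    (hA : IsToricSystem B K A) (i : Fin n) :
    IsToricSystem (fun v w : N × ℤ => B v.1 w.1 - v.2 * w.2) ((K, 1) : N × ℤ)
      (augment (fun j => ((A j, 0) : N × ℤ)) i ((0 : N), 1)) := by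
  obtain ⟨h1, h0, hs⟩ := hA
  have hci : (i:ℕ) < n := i.isLt
  have vn1 : ((1 : Fin n) : ℕ) = 1 := by rw [Fin.val_one']; exact Nat.mod_eq_of_lt (by omega)
  have vm1 : ((1 : Fin (n+1)) : ℕ) = 1 := by rw [Fin.val_one']; exact Nat.mod_eq_of_lt (by omega)
  have vm2 : ((2 : Fin (n+1)) : ℕ) = 2 := by
    rw [show (2 : Fin (n+1)) = 1 + 1 by ext; simp [Fin.val_add], Fin.add_def, Fin.val_one']
    rw [Nat.mod_eq_of_lt (show (1:ℕ) < n+1 by omega)]; exact Nat.mod_eq_of_lt (by omega)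
  -- the cyclic successor of `i` in `Fin n`, with modulus-free description
  obtain ⟨i1, hi1v, hi1⟩ : ∃ i1 : Fin n, i + 1 = i1 ∧
      ((i1:ℕ) = (i:ℕ)+1 ∨ ((i:ℕ)+1 = n ∧ (i1:ℕ) = 0)) := by
    refine ⟨i+1, rfl, ?_⟩
    have hv : ((i+1 : Fin n):ℕ) = ((i:ℕ)+1) % n := by rw [Fin.add_def, vn1]
    rw [hv]
    rcases modfact ((i:ℕ)+1) n (by omega) with h|h
    · left; omega
    · right; omega
  have hi1lt : (i1:ℕ) < n := i1.isLt
  have hB0 : ∀ x, B 0 x = 0 := by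
    intro x; have := hadd 0 0 x; rw [add_zero] at this; omega
  have hB0' : ∀ x, B x 0 = 0 := fun x => by rw [hsymm]; exact hB0 x
  have hOne : ∀ (a b : ℕ) (ha : a < n) (hb : b < n), (a + 1) % n = b →
      B (A ⟨a, ha⟩) (A ⟨b, hb⟩) = 1 := by
    intro a b ha hb hab
    have e : (⟨a, ha⟩ + 1 : Fin n) = ⟨b, hb⟩ := by
      rw [Fin.ext_iff, Fin.add_def, vn1]; exact hab
    rw [← e]; exact h1 _
  have hZero : ∀ (a b : ℕ) (ha : a < n) (hb : b < n),
      (b + 1) % n ≠ a → a ≠ b → (a + 1) % n ≠ b → B (A ⟨a, ha⟩) (A ⟨b, hb⟩) = 0 := by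
    intro a b ha hb x y z
    apply h0 ⟨a, ha⟩ ⟨b, hb⟩
    · intro h; apply x
      have h2 : (⟨b, hb⟩ : Fin n) + 1 = ⟨a, ha⟩ := by rw [h, sub_add_cancel]
      rw [Fin.ext_iff, Fin.add_def, vn1] at h2; exact h2
    · intro h; apply y; rw [Fin.ext_iff] at h; exact h.symm
    · intro h; apply z; rw [Fin.ext_iff, Fin.add_def, vn1] at h; exact h.symm
  have hOne' : ∀ (a b : ℕ) (ha : a < n) (hb : b < n),
      (b = a + 1 ∨ (a + 1 = n ∧ b = 0)) → B (A ⟨a, ha⟩) (A ⟨b, hb⟩) = 1 := by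
    intro a b ha hb hab
    refine hOne a b ha hb ?_
    rcases modfact (a+1) n (by omega) with ⟨e, e'⟩|⟨e, e'⟩ <;> omega
  have hZero' : ∀ (a b : ℕ) (ha : a < n) (hb : b < n),
      ¬(a = b + 1 ∨ (b + 1 = n ∧ a = 0)) → a ≠ b →
      ¬(b = a + 1 ∨ (a + 1 = n ∧ b = 0)) → B (A ⟨a, ha⟩) (A ⟨b, hb⟩) = 0 := by
    intro a b ha hb x y z
    refine hZero a b ha hb ?_ y ?_
    · rcases modfact (b+1) n (by omega) with ⟨e, e'⟩|⟨e, e'⟩ <;> omega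
    · rcases modfact (a+1) n (by omega) with ⟨e, e'⟩|⟨e, e'⟩ <;> omega
  have m1g := modfact ((i:ℕ)+1) (n+1) (by omega)
  have m2g := modfact ((i:ℕ)+2) (n+1) (by omega)
  -- entry lemmas for the augmented system
  have E0 : ∀ j : Fin (n+1), (j:ℕ) = (i:ℕ) →
      augment (fun j => ((A j, 0) : N × ℤ)) i ((0:N), 1) j = (A i, -1) := by
    intro j h
    have e : j = Fin.castSucc i := by rw [Fin.ext_iff, Fin.coe_castSucc]; exact h
    simp only [augment, if_pos e]; simp [Prod.ext_iff]
  have E1 : ∀ j : Fin (n+1), (j:ℕ) = (i:ℕ)+1 →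
      augment (fun j => ((A j, 0) : N × ℤ)) i ((0:N), 1) j = ((0:N), 1) := by
    intro j h
    have e0 : ¬ j = Fin.castSucc i := by rw [Fin.ext_iff, Fin.coe_castSucc]; omega
    have e1 : j = Fin.castSucc i + 1 := by
      rw [Fin.ext_iff]
      simp only [Fin.add_def, Fin.coe_castSucc, Fin.val_mk, vm1]; omega
    simp only [augment, if_neg e0, if_pos e1]
  have E2 : ∀ j : Fin (n+1), (j:ℕ) = ((i:ℕ)+2) % (n+1) →
      augment (fun j => ((A j, 0) : N × ℤ)) i ((0:N), 1) j = (A i1, -1) := by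
    intro j h
    have e0 : ¬ j = Fin.castSucc i := by rw [Fin.ext_iff, Fin.coe_castSucc]; omega
    have e1 : ¬ j = Fin.castSucc i + 1 := by
      rw [Fin.ext_iff]
      simp only [Fin.add_def, Fin.coe_castSucc, Fin.val_mk, vm1]; omega
    have e2 : j = Fin.castSucc i + 2 := by
      rw [Fin.ext_iff]
      simp only [Fin.add_def, Fin.coe_castSucc, Fin.val_mk, vm2]; omega
    simp only [augment, if_neg e0, if_neg e1, if_pos e2, hi1v]; simp [Prod.ext_iff]
  have E3 : ∀ (j : Fin (n+1)) (h : (j:ℕ) < (i:ℕ)), (j:ℕ) ≠ ((i:ℕ)+2) % (n+1) →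
      augment (fun j => ((A j, 0) : N × ℤ)) i ((0:N), 1) j = (A ⟨(j:ℕ), h.trans hci⟩, 0) := by
    intro j h h2
    have e0 : ¬ j = Fin.castSucc i := by rw [Fin.ext_iff, Fin.coe_castSucc]; omega
    have e1 : ¬ j = Fin.castSucc i + 1 := by
      rw [Fin.ext_iff]
      simp only [Fin.add_def, Fin.coe_castSucc, Fin.val_mk, vm1]; omega
    have e2 : ¬ j = Fin.castSucc i + 2 := by
      rw [Fin.ext_iff]
      simp only [Fin.add_def, Fin.coe_castSucc, Fin.val_mk, vm2]; omega
    simp only [augment, if_neg e0, if_neg e1, if_neg e2, dif_pos h]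
  have E4 : ∀ (j : Fin (n+1)), (i:ℕ)+1 < (j:ℕ) → (j:ℕ) ≠ ((i:ℕ)+2) % (n+1) →
      augment (fun j => ((A j, 0) : N × ℤ)) i ((0:N), 1) j
        = (A ⟨(j:ℕ) - 1, by have := j.isLt; omega⟩, 0) := by
    intro j h h2
    have e0 : ¬ j = Fin.castSucc i := by rw [Fin.ext_iff, Fin.coe_castSucc]; omega
    have e1 : ¬ j = Fin.castSucc i + 1 := by
      rw [Fin.ext_iff]
      simp only [Fin.add_def, Fin.coe_castSucc, Fin.val_mk, vm1]; omega
    have e2 : ¬ j = Fin.castSucc i + 2 := by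
      rw [Fin.ext_iff]
      simp only [Fin.add_def, Fin.coe_castSucc, Fin.val_mk, vm2]; omega
    have e3 : ¬ (j:ℕ) < (i:ℕ) := by omega
    simp only [augment, if_neg e0, if_neg e1, if_neg e2, dif_neg e3]
  refine ⟨?_, ?_, ?_⟩
  · -- adjacency
    intro j
    have hji := j.isLt
    obtain ⟨k, hG, hk⟩ : ∃ k : Fin (n+1), j + 1 = k ∧
        ((k:ℕ) = (j:ℕ)+1 ∨ ((j:ℕ) = n ∧ (k:ℕ) = 0)) := by
      refine ⟨j+1, rfl, ?_⟩
      have hv : ((j+1 : Fin (n+1)):ℕ) = ((j:ℕ)+1) % (n+1) := by rw [Fin.add_def, vm1]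
      rw [hv]
      rcases modfact ((j:ℕ)+1) (n+1) (by omega) with h|h
      · left; omega
      · right; omega
    have hki := k.isLt
    rw [hG]
    by_cases b0 : (j:ℕ) = (i:ℕ)
    · rw [E0 j b0, E1 k (by omega)]
      simp [hB0']
    · by_cases b1 : (j:ℕ) = (i:ℕ)+1
      · rw [E1 j b1, E2 k (by omega)]
        simp [hB0]
      · by_cases b2 : (j:ℕ) = ((i:ℕ)+2) % (n+1)
        · rw [E2 j b2]
          by_cases w : (k:ℕ) < (i:ℕ)
          · rw [E3 k w (by omega)]
            show B (A i1) _ - (-1) * 0 = 1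
            norm_num
            refine hOne' _ _ ?_ ?_ ?_ <;> omega
          · rw [E4 k (by omega) (by omega)]
            show B (A i1) _ - (-1) * 0 = 1
            norm_num
            refine hOne' _ _ ?_ ?_ ?_ <;> omega
        · by_cases w : (j:ℕ) < (i:ℕ)
          · rw [E3 j w b2]
            by_cases w2 : (j:ℕ)+1 = (i:ℕ)
            · rw [E0 k (by omega)]
              show B _ (A i) - 0 * (-1) = 1
              norm_num
              refine hOne' _ _ ?_ ?_ ?_ <;> omega
            · rw [E3 k (show (k:ℕ) < (i:ℕ) by omega) (by omega)]
              norm_num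
              refine hOne' _ _ ?_ ?_ ?_ <;> omega
          · -- (i:ℕ)+1 < j
            rw [E4 j (by omega) b2]
            by_cases w2 : (j:ℕ) = n
            · by_cases w3 : (i:ℕ) = 0
              · rw [E0 k (by omega)]
                show B _ (A i) - 0 * (-1) = 1
                norm_num
                refine hOne' _ _ ?_ ?_ ?_ <;> omega
              · rw [E3 k (show (k:ℕ) < (i:ℕ) by omega) (by omega)]
                norm_num
                refine hOne' _ _ ?_ ?_ ?_ <;> omega
            · rw [E4 k (by omega) (by omega)]
              norm_num
              refine hOne' _ _ ?_ ?_ ?_ <;> omega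
  · -- orthogonality
    intro j k hkj1' hkj' hjk1'
    have hji := j.isLt
    have hki := k.isLt
    have Hkj1 : ((k:ℕ)+1) % (n+1) ≠ (j:ℕ) := by
      have h2 : k + 1 ≠ j := by intro h'; exact hkj1' (by rw [← h']; rw [add_sub_cancel_right])
      rw [Fin.ne_iff_vne, Fin.add_def, vm1] at h2; exact h2
    have Hkj : (k:ℕ) ≠ (j:ℕ) := fun h => hkj' (Fin.ext h)
    have Hjk1 : (k:ℕ) ≠ ((j:ℕ)+1) % (n+1) := by
      intro h; exact hjk1' (by rw [Fin.ext_iff, Fin.add_def, vm1]; exact h)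
    have m3 := modfact ((j:ℕ)+1) (n+1) (by omega)
    have m4 := modfact ((k:ℕ)+1) (n+1) (by omega)
    by_cases b0j : (j:ℕ) = (i:ℕ)
    · by_cases b2k : (k:ℕ) = ((i:ℕ)+2) % (n+1)
      · rw [E0 j b0j, E2 k b2k]
        show B (A i) (A i1) - (-1) * (-1) = 0
        have : B (A i) (A i1) = 1 := by
          refine hOne' _ _ ?_ ?_ ?_ <;> omega
        omega
      · by_cases w : (k:ℕ) < (i:ℕ)
        · rw [E0 j b0j, E3 k w b2k]
          norm_num
          refine hZero' _ _ ?_ ?_ ?_ ?_ ?_ <;> omega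
        · rw [E0 j b0j, E4 k (by omega) b2k]
          norm_num
          refine hZero' _ _ ?_ ?_ ?_ ?_ ?_ <;> omega
    · by_cases b1j : (j:ℕ) = (i:ℕ)+1
      · by_cases b0k : (k:ℕ) = (i:ℕ)
        · exfalso; omega
        · by_cases b1k : (k:ℕ) = (i:ℕ)+1
          · exfalso; omega
          · by_cases b2k : (k:ℕ) = ((i:ℕ)+2) % (n+1)
            · exfalso; omega
            · rw [E1 j b1j]
              by_cases w : (k:ℕ) < (i:ℕ)
              · rw [E3 k w b2k]; simp [hB0]
              · rw [E4 k (by omega) b2k]; simp [hB0]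
      · by_cases b2j : (j:ℕ) = ((i:ℕ)+2) % (n+1)
        · rw [E2 j b2j]
          by_cases b0k : (k:ℕ) = (i:ℕ)
          · rw [E0 k b0k]
            show B (A i1) (A i) - (-1) * (-1) = 0
            have : B (A i1) (A i) = 1 := by
              rw [hsymm]; refine hOne' _ _ ?_ ?_ ?_ <;> omega
            omega
          · by_cases b1k : (k:ℕ) = (i:ℕ)+1
            · exfalso; omega
            · by_cases b2k : (k:ℕ) = ((i:ℕ)+2) % (n+1)
              · exfalso; omega
              · by_cases w : (k:ℕ) < (i:ℕ)
                · rw [E3 k w b2k]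
                  norm_num
                  refine hZero' _ _ ?_ ?_ ?_ ?_ ?_ <;> omega
                · rw [E4 k (by omega) b2k]
                  norm_num
                  refine hZero' _ _ ?_ ?_ ?_ ?_ ?_ <;> omega
        · by_cases wj : (j:ℕ) < (i:ℕ)
          · rw [E3 j wj b2j]
            by_cases b0k : (k:ℕ) = (i:ℕ)
            · rw [E0 k b0k]
              norm_num
              refine hZero' _ _ ?_ ?_ ?_ ?_ ?_ <;> omega
            · by_cases b1k : (k:ℕ) = (i:ℕ)+1
              · rw [E1 k b1k]; simp [hB0']
              · by_cases b2k : (k:ℕ) = ((i:ℕ)+2) % (n+1)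
                · rw [E2 k b2k]
                  norm_num
                  refine hZero' _ _ ?_ ?_ ?_ ?_ ?_ <;> omega
                · by_cases wk : (k:ℕ) < (i:ℕ)
                  · rw [E3 k wk b2k]
                    norm_num
                    refine hZero' _ _ ?_ ?_ ?_ ?_ ?_ <;> omega
                  · rw [E4 k (by omega) b2k]
                    norm_num
                    refine hZero' _ _ ?_ ?_ ?_ ?_ ?_ <;> omega
          · rw [E4 j (by omega) b2j]
            by_cases b0k : (k:ℕ) = (i:ℕ)
            · rw [E0 k b0k]
              norm_num
              refine hZero' _ _ ?_ ?_ ?_ ?_ ?_ <;> omega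
            · by_cases b1k : (k:ℕ) = (i:ℕ)+1
              · rw [E1 k b1k]; simp [hB0']
              · by_cases b2k : (k:ℕ) = ((i:ℕ)+2) % (n+1)
                · rw [E2 k b2k]
                  norm_num
                  refine hZero' _ _ ?_ ?_ ?_ ?_ ?_ <;> omega
                · by_cases wk : (k:ℕ) < (i:ℕ)
                  · rw [E3 k wk b2k]
                    norm_num
                    refine hZero' _ _ ?_ ?_ ?_ ?_ ?_ <;> omega
                  · rw [E4 k (by omega) b2k]
                    norm_num
                    refine hZero' _ _ ?_ ?_ ?_ ?_ ?_ <;> omega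
  · -- sum
    have hsa : ∀ j : Fin n, ∃ t : Fin (n+1), (Fin.succ i).succAbove j = t ∧
        (((j:ℕ) < (i:ℕ)+1 ∧ (t:ℕ) = (j:ℕ)) ∨ (¬((j:ℕ) < (i:ℕ)+1) ∧ (t:ℕ) = (j:ℕ)+1)) := by
      intro j
      refine ⟨(Fin.succ i).succAbove j, rfl, ?_⟩
      by_cases h : (j:ℕ) < (i:ℕ)+1
      · left
        refine ⟨h, ?_⟩
        rw [Fin.succAbove, if_pos (by rw [Fin.lt_def]; simpa using h)]
        simp
      · right
        refine ⟨h, ?_⟩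
        rw [Fin.succAbove, if_neg (by rw [Fin.lt_def]; simpa using h)]
        simp [Fin.val_succ]
    have key : ∀ j : Fin n, augment (fun j => ((A j, 0) : N × ℤ)) i ((0:N), 1)
        ((Fin.succ i).succAbove j)
        = (A j, if (j:ℕ) = (i:ℕ) ∨ (j:ℕ) = (i1:ℕ) then (-1:ℤ) else 0) := by
      intro j
      have hji := j.isLt
      obtain ⟨t, ht, hts⟩ := hsa j
      have hti := t.isLt
      rw [ht]
      by_cases c1 : (j:ℕ) = (i:ℕ)
      · rw [E0 t (by omega), if_pos (Or.inl c1), show j = i from Fin.ext c1]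
      · by_cases c2 : (j:ℕ) = (i1:ℕ)
        · rw [E2 t (by omega), if_pos (Or.inr c2), show j = i1 from Fin.ext c2]
        · rw [if_neg (by tauto)]
          by_cases w : (j:ℕ) < (i:ℕ)
          · rw [E3 t (show (t:ℕ) < (i:ℕ) by omega) (by omega)]
            have : (⟨(t:ℕ), by omega⟩ : Fin n) = j := Fin.ext (by simp; omega)
            rw [this]
          · rw [E4 t (by omega) (by omega)]
            have : (⟨(t:ℕ) - 1, by omega⟩ : Fin n) = j := Fin.ext (by simp; omega)
            rw [this]
    rw [Fin.sum_univ_succAbove (augment (fun j => ((A j, 0) : N × ℤ)) i ((0:N), 1)) (Fin.succ i)]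
    rw [E1 (Fin.succ i) (by simp [Fin.val_succ])]
    rw [Finset.sum_congr rfl (fun j _ => key j)]
    have hne : i1 ≠ i := by rw [Fin.ne_iff_vne]; omega
    apply Prod.ext
    · simp only [Prod.fst_add, Prod.fst_sum]
      simpa using hs
    · simp only [Prod.snd_add, Prod.snd_sum]
      have hpt : ∀ j : Fin n, (((A j, if (j:ℕ) = (i:ℕ) ∨ (j:ℕ) = (i1:ℕ)
          then (-1:ℤ) else 0) : N × ℤ)).2
          = (if j = i then (-1:ℤ) else 0) + (if j = i1 then (-1:ℤ) else 0) := by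
        intro j
        by_cases c1 : j = i
        · rw [if_pos c1, if_neg (show ¬ j = i1 by rw [c1]; exact fun h => hne h.symm)]
          simp [if_pos (Or.inl (congrArg Fin.val c1))]
        · by_cases c2 : j = i1
          · rw [if_neg c1, if_pos c2]
            simp [if_pos (Or.inr (congrArg Fin.val c2))]
          · rw [if_neg c1, if_neg c2]
            have : ¬ ((j:ℕ) = (i:ℕ) ∨ (j:ℕ) = (i1:ℕ)) := by
              rintro (h|h)
              · exact c1 (Fin.ext h)
              · exact c2 (Fin.ext h)
            simp [this]
      rw [Finset.sum_congr rfl (fun j _ => hpt j), Finset.sum_add_distrib,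
        Finset.sum_ite_eq', Finset.sum_ite_eq']
      simp
end

section
/- Define the left mutation of toric systems on $\mathcal{F}_r$ at the first position by $L_1(A_1, A_2, A_3, A_4) = (-A_1, A_1, A_1 + A_2, A_4 - A_1)$ applied formally via the associated exceptional sequence, which on the family $\mathcal{A}_{r,i} = (P, iP+Q, P, -(r+i)P+Q)$ acts as $L_1 \mathcal{A}_{r,i} = \mathcal{A}_{r,i+1}$. Then for every integer $\alpha$ and the isometry $\bar\pi\colon \operatorname{Pic}(\mathcal{F}_r) \to \operatorname{Pic}(\mathcal{F}_{r+2\alpha})$, $P \mapsto P'$, $Q \mapsto Q' - \alpha P'$, one has $\bar\pi(L_1^\alpha \mathcal{A}_{r,i}) = \mathcal{A}_{r+2\alpha, i}$ (elementwise equality of 4-tuples in $\operatorname{Pic}(\mathcal{F}_{r+2\alpha})$). -/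
/-- The toric system `𝒜_{s,j} = (P, jP+Q, P, -(s+j)P+Q)` in coordinates
(basis `P, Q` of `Pic (𝔽_s)` with `P² = 0`, `P·Q = 1`, `Q² = s`). -/
def stdA (s j : ℤ) : Fin 4 → ℤ × ℤ := ![(1, 0), (j, 1), (1, 0), (-(s + j), 1)]

/-- Left mutation of a toric system on a surface with canonical class `K` at the
first position, computed formally via the associated exceptional sequence
`(0, A₁, A₁+A₂, A₁+A₂+A₃)` (mutating the first pair `(𝒪, 𝒪(A₁))` replaces the
first object by `2·0 - A₁ = -A₁`) and taking the toric system of the result. -/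
def lmut (K : ℤ × ℤ) (A : Fin 4 → ℤ × ℤ) : Fin 4 → ℤ × ℤ :=
  ![A 0, A 0 + A 1, A 2, -K - A 0 - A 0 - A 1 - A 2]

lemma lmut_stdA (r j : ℤ) : lmut (r - 2, -2) (stdA r j) = stdA r (j + 1) := by
  funext k
  fin_cases k <;> simp [lmut, stdA, Prod.ext_iff] <;> ring

lemma lmut_iter (r i : ℤ) (α : ℕ) :
    (lmut (r - 2, -2))^[α] (stdA r i) = stdA r (i + α) := by
  induction α with
  | zero => simp
  | succ n ih =>
      rw [Function.iterate_succ_apply', ih, lmut_stdA]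
      congr 1
      push_cast
      ring

/-- Left mutation at the first position acts on the family `𝒜_{r,i}` as
`L₁ 𝒜_{r,i} = 𝒜_{r,i+1}` (here `K = K_{𝔽_r} = (r-2, -2)`), and for the
degeneration map `π̄ : Pic (𝔽_r) → Pic (𝔽_{r+2α})` one has
`π̄ (L₁^α 𝒜_{r,i}) = 𝒜_{r+2α, i}`. In particular the `α`-fold left mutation of
the canonical toric system on `𝔽_r` degenerates to the canonical toric system
on `𝔽_{r+2α}`. -/
theorem lmut_iterate_degenerates (r : ℤ) (hr : 0 ≤ r) (i : ℤ) (α : ℕ) :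
    (∀ j : ℤ, lmut (r - 2, -2) (stdA r j) = stdA r (j + 1)) ∧
    (piMap (α : ℤ)) ∘ ((lmut (r - 2, -2))^[α] (stdA r i)) = stdA (r + 2 * α) i := by
  refine ⟨lmut_stdA r, ?_⟩
  rw [lmut_iter]
  funext k
  fin_cases k <;> simp [piMap, stdA, Prod.ext_iff] <;> ring
end
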